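/- A matrix A ∈ 𝐔^m is an extreme point of 𝐔^m if and only if it is an extreme point of 𝐔_m; in other words, Extr(𝐔^m) = 𝐔^m ∩ Extr(𝐔_m). -/
import Mathlib


open Matrix Finset

def IsInU {m : ℕ} (A : Matrix (Fin m) (Fin m) ℝ) : Prop :=
  A.IsSymm ∧ (∀ i j, 0 ≤ A i j) ∧
    ∀ α : Finset (Fin m), ∑ i ∈ α, ∑ j ∈ α, A i j ≤ (α.card : ℝ)

def IsInUtop {m : ℕ} (A : Matrix (Fin m) (Fin m) ℝ) : Prop :=
  IsInU A ∧ ∑ i, ∑ j, A i j = (m : ℝ)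

def IsExtremeIn {m : ℕ} (S : Matrix (Fin m) (Fin m) ℝ → Prop)
    (A : Matrix (Fin m) (Fin m) ℝ) : Prop :=
  S A ∧ ∀ A₁ A₂, S A₁ → S A₂ → A₁ + A₂ = (2 : ℝ) • A → A₁ = A ∧ A₂ = A

def IsRowStochastic {m : ℕ} (X : Matrix (Fin m) (Fin m) ℝ) : Prop :=
  (∀ i j, 0 ≤ X i j) ∧ ∀ i, ∑ j, X i j = 1

def IsSubstochastic {m : ℕ} (X : Matrix (Fin m) (Fin m) ℝ) : Prop :=
  (∀ i j, 0 ≤ X i j) ∧ ∀ i, ∑ j, X i j ≤ 1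

theorem stmt_9 {m : ℕ} (A : Matrix (Fin m) (Fin m) ℝ) (hA : IsInUtop A) :
    IsExtremeIn IsInUtop A ↔ IsExtremeIn IsInU A := by
  constructor
  · rintro ⟨-, hext⟩
    refine ⟨hA.1, fun A₁ A₂ h₁ h₂ hsum => ?_⟩
    -- sums of entries
    have key : ∀ B : Matrix (Fin m) (Fin m) ℝ, IsInU B → ∑ i, ∑ j, B i j ≤ (m : ℝ) := by
      intro B hB
      have := hB.2.2 Finset.univ
      simpa using this
    have hs : (∑ i, ∑ j, A₁ i j) + (∑ i, ∑ j, A₂ i j) = 2 * (m : ℝ) := by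
      have : ∑ i, ∑ j, (A₁ + A₂) i j = ∑ i, ∑ j, ((2:ℝ) • A) i j := by rw [hsum]
      simpa [Matrix.add_apply, Matrix.smul_apply, Finset.sum_add_distrib,
        ← Finset.mul_sum, hA.2] using this
    have h₁m := key A₁ h₁
    have h₂m := key A₂ h₂
    have e₁ : ∑ i, ∑ j, A₁ i j = (m : ℝ) := by linarith
    have e₂ : ∑ i, ∑ j, A₂ i j = (m : ℝ) := by linarith
    exact hext A₁ A₂ ⟨h₁, e₁⟩ ⟨h₂, e₂⟩ hsum
  · rintro ⟨-, hext⟩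
    exact ⟨hA, fun A₁ A₂ h₁ h₂ hsum => hext A₁ A₂ h₁.1 h₂.1 hsum⟩
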